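/- For a simple Toeplitz word p^(∞), the condition (PQ) holds with constant 1/8: for every j ≥ 1, liminf_{L→∞} (j/L)·#_nonoverlap(p^(∞)[1..j], p^(∞)[1..L]) ≥ 1/8. -/

import Mathlib

/-- The palindromic blocks of a simple Toeplitz word: `pBlock a n (k+1)` is the paper's
`p^(k)`. -/
def pBlock {A : Type*} (a : ℕ → A) (n : ℕ → ℕ) : ℕ → List A
  | 0 => []
  | k + 1 => (List.replicate (n k - 1) (pBlock a n k ++ [a k])).flatten ++ pBlock a n k

/-- The one-sided infinite limit word `p^(∞)` of the nested blocks `p^(k)`. -/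
def pInf {A : Type*} (a : ℕ → A) (n : ℕ → ℕ) : ℕ → A :=
  fun i => (pBlock a n (i + 2)).getD i (a 0)

/-- The prefix of length `L` of a one-sided infinite word. -/
def prefixWord {A : Type*} (ρ : ℕ → A) (L : ℕ) : List A := List.ofFn fun i : Fin L => ρ i

/-- `u` occurs in `v` starting at position `s`. -/
def occursAt {A : Type*} (u v : List A) (s : ℕ) : Prop :=
  s + u.length ≤ v.length ∧ (v.drop s).take u.length = u

/-- The maximal number of pairwise non-overlapping occurrences of `u` in `v`. -/
noncomputable def nonoverlap {A : Type*} (u v : List A) : ℕ :=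
  sSup {m : ℕ | ∃ S : Finset ℕ, S.card = m ∧ (∀ s ∈ S, occursAt u v s) ∧
    ∀ s ∈ S, ∀ t ∈ S, s ≠ t → s + u.length ≤ t ∨ t + u.length ≤ s}

/-!
Let `ℓ k = period a n k = |pBlock a n k| + 1`, so that `ℓ (k + 1) = n k * ℓ k`. The letter of
`p^(∞)` at `x` depends only on `x % ℓ k` unless `ℓ k ∣ x + 1`, and it is `a k` if
`ℓ k ∣ x + 1` but `ℓ (k + 1) ∤ x + 1`. Hence the prefix of length `j` recurs at every multiple
`s` of `ℓ k` such that `s % ℓ (k + 1) + j < ℓ (k + 1)`. For `ℓ K ≤ j < ℓ (K + 1)` and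
`m = j / ℓ K`, the positions `q * ℓ (K + 1) + r * (m + 1) * ℓ K` with `q < L / ℓ (K + 1)` and
`r < n K / (m + 1)` are pairwise disjoint occurrences in `p^(∞)[1..L]`; each of the three
floors `L / ℓ (K + 1)`, `n K / (m + 1)`, `j / ℓ K` costs at most a factor `2`, whence `1/8`.
-/

theorem List.getElem_flatten_replicate {α : Type*} (w : List α) (c x : ℕ)
    (hx : x < (List.replicate c w).flatten.length) :
    (List.replicate c w).flatten[x] =
      w[x % w.length]'(Nat.mod_lt _ (List.length_pos_iff.mpr (by rintro rfl; simp at hx))) := by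
  induction c generalizing x with
  | zero => simp at hx
  | succ c ih =>
    simp only [List.replicate_succ, List.flatten_cons, List.getElem_append]
    split_ifs with h
    · simp [Nat.mod_eq_of_lt h]
    · simp [ih, Nat.mod_eq_sub_mod (not_lt.mp h)]

theorem Nat.dvd_mod_add_one_iff {d P x : ℕ} (hd : 0 < d) (hdP : d ∣ P) :
    d ∣ x % P + 1 ↔ d ∣ x + 1 := by
  rw [← Nat.mod_eq_sub_iff one_pos hd, ← Nat.mod_eq_sub_iff one_pos hd, Nat.mod_mod_of_dvd _ hdP]

theorem Nat.lt_two_mul_div_mul {x d : ℕ} (hd : 0 < d) (h : d ≤ x) : x < 2 * (x / d * d) := by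
  have := Nat.lt_div_mul_add (a := x) hd
  have : 1 * d ≤ x / d * d := Nat.mul_le_mul_right _ ((Nat.one_le_div_iff hd).mpr h)
  omega

section Nonoverlap

variable {A : Type*} {u v : List A}

theorem subset_range_of_occursAt (hu : u ≠ []) {S : Finset ℕ} (hS : ∀ s ∈ S, occursAt u v s) :
    S ⊆ Finset.range v.length := fun s hs => by
  have := (hS s hs).1
  have := List.length_pos_iff.mpr hu
  simp only [Finset.mem_range]
  omega

theorem nonoverlap_le_length (hu : u ≠ []) : nonoverlap u v ≤ v.length :=
  csSup_le ⟨0, ∅, by simp⟩ fun _ ⟨S, hS, hocc, _⟩ =>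
    hS ▸ (Finset.card_le_card (subset_range_of_occursAt hu hocc)).trans_eq (Finset.card_range _)

theorem card_le_nonoverlap (hu : u ≠ []) {S : Finset ℕ} (hocc : ∀ s ∈ S, occursAt u v s)
    (hsep : ∀ s ∈ S, ∀ t ∈ S, s ≠ t → s + u.length ≤ t ∨ t + u.length ≤ s) :
    S.card ≤ nonoverlap u v :=
  le_csSup ⟨v.length, fun _ ⟨_, hT, hTocc, _⟩ =>
    hT ▸ (Finset.card_le_card (subset_range_of_occursAt hu hTocc)).trans_eq (Finset.card_range _)⟩
    ⟨S, rfl, hocc, hsep⟩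

theorem grid_separated {P d t q r q' r' : ℕ} (hP : t * d ≤ P) (hr : r < t) (hr' : r' < t)
    (hne : (q, r) ≠ (q', r')) :
    q * P + r * d + d ≤ q' * P + r' * d ∨ q' * P + r' * d + d ≤ q * P + r * d := by
  rcases lt_trichotomy q q' with h | rfl | h
  · left; nlinarith
  · have : r ≠ r' := fun h => hne (by rw [h])
    rcases this.lt_or_gt with h | h
    · left; nlinarith
    · right; nlinarith
  · right; nlinarith

theorem mul_le_nonoverlap_of_grid (hu : u ≠ []) {P d Q t : ℕ} (hd : u.length ≤ d)
    (hP : t * d ≤ P) (hocc : ∀ q < Q, ∀ r < t, occursAt u v (q * P + r * d)) :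
    Q * t ≤ nonoverlap u v := by
  have hd0 : 0 < d := (List.length_pos_iff.mpr hu).trans_le hd
  let f : ℕ × ℕ → ℕ := fun x => x.1 * P + x.2 * d
  have hinj : Set.InjOn f (Finset.range Q ×ˢ Finset.range t : Finset (ℕ × ℕ)) := by
    rintro ⟨q, r⟩ hx ⟨q', r'⟩ hy hf
    simp only [Finset.coe_product, Finset.coe_range, Set.mem_prod, Set.mem_Iio] at hx hy
    by_contra hne
    have := grid_separated hP hx.2 hy.2 hne
    simp only [f] at hf
    omega
  have hcard := Finset.card_image_of_injOn hinj
  rw [Finset.card_product, Finset.card_range, Finset.card_range] at hcard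
  rw [← hcard]
  apply card_le_nonoverlap hu
  · simp only [Finset.mem_image, Finset.mem_product, Finset.mem_range, Prod.exists]
    rintro _ ⟨q, r, ⟨hq, hr⟩, rfl⟩
    exact hocc q hq r hr
  · simp only [Finset.mem_image, Finset.mem_product, Finset.mem_range, Prod.exists]
    rintro _ ⟨q, r, ⟨-, hr⟩, rfl⟩ _ ⟨q', r', ⟨-, hr'⟩, rfl⟩ hne
    have := grid_separated hP hr hr' (fun h => hne (by rw [h]))
    simp only [f]
    omega

end Nonoverlap

@[simp]
theorem length_prefixWord {A : Type*} (ρ : ℕ → A) (L : ℕ) : (prefixWord ρ L).length = L :=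
  List.length_ofFn

theorem prefixWord_ne_nil {A : Type*} (ρ : ℕ → A) {L : ℕ} (hL : 1 ≤ L) : prefixWord ρ L ≠ [] :=
  List.ne_nil_of_length_pos (by rw [length_prefixWord]; omega)

theorem occursAt_prefixWord {A : Type*} {ρ : ℕ → A} {j L s : ℕ} (hL : s + j ≤ L)
    (h : ∀ i < j, ρ (s + i) = ρ i) : occursAt (prefixWord ρ j) (prefixWord ρ L) s := by
  refine ⟨by simpa using hL, List.ext_getElem ?_ ?_⟩
  · simp only [List.length_take, List.length_drop, length_prefixWord]
    omega
  · intro i _ hi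
    simpa [prefixWord] using h i (by simpa using hi)

namespace SimpleToeplitz

variable {A : Type*} (a : ℕ → A) (n : ℕ → ℕ)

/-- The paper's `|p^(k-1)| + 1`; `pBlock a n k` is `p^(k-1)` and `a k` is `a_{k+1}`. -/
def period (k : ℕ) : ℕ := (pBlock a n k).length + 1

variable {a n}

theorem period_zero : period a n 0 = 1 := rfl

theorem period_pos (k : ℕ) : 0 < period a n k := Nat.succ_pos _

theorem length_pBlock (k : ℕ) : (pBlock a n k).length = period a n k - 1 := rfl

theorem pBlock_succ_append {k : ℕ} (hk : 1 ≤ n k) :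
    pBlock a n (k + 1) ++ [a k] = (List.replicate (n k) (pBlock a n k ++ [a k])).flatten := by
  obtain ⟨c, hc⟩ : ∃ c, n k = c + 1 := ⟨n k - 1, by omega⟩
  simp [pBlock, hc, List.replicate_succ']

theorem period_succ {k : ℕ} (hk : 1 ≤ n k) : period a n (k + 1) = n k * period a n k := by
  simpa [period] using congrArg List.length (pBlock_succ_append (a := a) hk)

theorem pBlock_prefix_succ {k : ℕ} (hk : 2 ≤ n k) : pBlock a n k <+: pBlock a n (k + 1) := by
  obtain ⟨c, hc⟩ : ∃ c, n k - 1 = c + 1 := ⟨n k - 2, by omega⟩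
  simp only [pBlock, hc, List.replicate_succ, List.flatten_cons, List.append_assoc]
  exact List.prefix_append _ _

theorem pBlock_prefix (hn : ∀ k, 2 ≤ n k) {k M : ℕ} (h : k ≤ M) : pBlock a n k <+: pBlock a n M := by
  induction M, h using Nat.le_induction with
  | base => exact List.prefix_refl _
  | succ M _ ih => exact ih.trans (pBlock_prefix_succ (hn M))

theorem period_dvd (hn : ∀ k, 2 ≤ n k) {k M : ℕ} (h : k ≤ M) : period a n k ∣ period a n M := by
  induction M, h using Nat.le_induction with
  | base => exact dvd_rfl
  | succ M _ ih => exact (period_succ (by linarith [hn M])).symm ▸ ih.mul_left _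

theorem lt_period (hn : ∀ k, 2 ≤ n k) (k : ℕ) : k < period a n k := by
  induction k with
  | zero => simp [period_zero]
  | succ k ih => rw [period_succ (by linarith [hn k])]; nlinarith [hn k]

theorem pInf_eq_getElem (hn : ∀ k, 2 ≤ n k) {x M : ℕ} (hx : x < (pBlock a n M).length) :
    pInf a n x = (pBlock a n M)[x] := by
  have hx2 : x < (pBlock a n (x + 2)).length := by
    have := lt_period (a := a) hn (x + 2); rw [length_pBlock]; omega
  rw [pInf, List.getD_eq_getElem _ _ hx2]
  rcases le_total (x + 2) M with h | h
  · exact (pBlock_prefix hn h).getElem hx2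
  · exact ((pBlock_prefix hn h).getElem hx).symm

theorem pInf_of_lt_length_succ (hn : ∀ k, 2 ≤ n k) {k x : ℕ}
    (hx : x < (pBlock a n (k + 1)).length) :
    pInf a n x = if period a n k ∣ x + 1 then a k else pInf a n (x % period a n k) := by
  have hmod : x % period a n k < period a n k := Nat.mod_lt _ (period_pos k)
  have hhole : period a n k ∣ x + 1 ↔ x % period a n k = (pBlock a n k).length := by
    rw [← Nat.mod_eq_sub_iff one_pos (period_pos k), length_pBlock]
  rw [pInf_eq_getElem hn hx, (List.prefix_append _ [a k]).getElem hx]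
  simp only [pBlock_succ_append (a := a) (by linarith [hn k] : 1 ≤ n k),
    List.getElem_flatten_replicate, List.getElem_append, List.length_append,
    List.length_singleton, hhole]
  unfold period at hmod ⊢
  split_ifs with h1 h2 h2
  · omega
  · exact (pInf_eq_getElem hn h1).symm
  · simp
  · omega

theorem pInf_eq_pInf_mod_of_lt (hn : ∀ k, 2 ≤ n k) (M : ℕ) {x k : ℕ}
    (hx : x < (pBlock a n M).length) (hk : ¬ period a n k ∣ x + 1) :
    pInf a n x = pInf a n (x % period a n k) := by
  induction M generalizing x k with
  | zero => simp [pBlock] at hx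
  | succ M ih =>
    rcases le_or_gt k M with hkM | hMk
    · have hdvd := period_dvd (a := a) hn hkM
      have hM : ¬ period a n M ∣ x + 1 := fun h => hk (hdvd.trans h)
      rw [pInf_of_lt_length_succ hn hx, if_neg hM, ih (x := x % period a n M) (k := k),
        Nat.mod_mod_of_dvd _ hdvd]
      · have := Nat.mod_lt x (period_pos (a := a) (n := n) M)
        rw [← Nat.mod_eq_sub_iff one_pos (period_pos M)] at hM
        rw [length_pBlock]
        omega
      · rwa [Nat.dvd_mod_add_one_iff (period_pos k) hdvd]
    · have : period a n (M + 1) ≤ period a n k := Nat.le_of_dvd (period_pos k) (period_dvd hn hMk)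
      rw [length_pBlock] at hx
      rw [Nat.mod_eq_of_lt (by omega)]

theorem pInf_eq_pInf_mod (hn : ∀ k, 2 ≤ n k) {k x : ℕ} (hx : ¬ period a n k ∣ x + 1) :
    pInf a n x = pInf a n (x % period a n k) :=
  pInf_eq_pInf_mod_of_lt hn (x + 2)
    (by have := lt_period (a := a) hn (x + 2); rw [length_pBlock]; omega) hx

theorem pInf_eq_of_dvd (hn : ∀ k, 2 ≤ n k) {k x : ℕ} (h : period a n k ∣ x + 1)
    (h' : ¬ period a n (k + 1) ∣ x + 1) : pInf a n x = a k := by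
  have hpos := period_pos (a := a) (n := n) (k + 1)
  rw [pInf_eq_pInf_mod hn h', pInf_of_lt_length_succ hn, if_pos]
  · rwa [Nat.dvd_mod_add_one_iff (period_pos k) (period_dvd hn k.le_succ)]
  · have := Nat.mod_lt x hpos
    rw [← Nat.mod_eq_sub_iff one_pos hpos] at h'
    rw [length_pBlock]
    omega

theorem pInf_add_eq (hn : ∀ k, 2 ≤ n k) {k s i : ℕ} (hs : period a n k ∣ s)
    (hi : s % period a n (k + 1) + i + 1 < period a n (k + 1)) :
    pInf a n (s + i) = pInf a n i := by
  have hi' : ¬ period a n (k + 1) ∣ i + 1 := Nat.not_dvd_of_pos_of_lt (by omega) (by omega)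
  have hsi' : ¬ period a n (k + 1) ∣ s + i + 1 := by
    rw [← Nat.div_add_mod s (period a n (k + 1)), add_assoc, add_assoc,
      Nat.dvd_add_right (dvd_mul_right _ _), ← add_assoc]
    exact Nat.not_dvd_of_pos_of_lt (by omega) hi
  by_cases h : period a n k ∣ i + 1
  · rw [pInf_eq_of_dvd hn h hi', pInf_eq_of_dvd hn (by rw [add_assoc]; exact dvd_add hs h) hsi']
  · have h' : ¬ period a n k ∣ s + i + 1 := by rwa [add_assoc, Nat.dvd_add_right hs]
    obtain ⟨c, rfl⟩ := hs
    rw [pInf_eq_pInf_mod hn h, pInf_eq_pInf_mod hn h', Nat.mul_add_mod]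

theorem exists_period_le_lt (hn : ∀ k, 2 ≤ n k) {j : ℕ} (hj : 1 ≤ j) :
    ∃ K, period a n K ≤ j ∧ j < period a n (K + 1) := by
  classical
  have hex : ∃ k, j < period a n k := ⟨j, lt_period hn j⟩
  obtain ⟨K, hK⟩ : ∃ K, Nat.find hex = K + 1 := Nat.exists_eq_add_one_of_ne_zero fun h => by
    have := Nat.find_spec hex
    rw [h, period_zero] at this
    omega
  exact ⟨K, not_lt.mp (Nat.find_min hex (by omega)), hK ▸ Nat.find_spec hex⟩

theorem le_eight_mul_nonoverlap (hn : ∀ k, 2 ≤ n k) {j K L : ℕ} (hK : period a n K ≤ j)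
    (hK' : j < period a n (K + 1)) (hL : period a n (K + 1) ≤ L) :
    L ≤ 8 * j * nonoverlap (prefixWord (pInf a n) j) (prefixWord (pInf a n) L) := by
  set ℓ := period a n K
  set P := period a n (K + 1)
  have hℓ : 0 < ℓ := period_pos K
  have hP : P = n K * ℓ := period_succ (by linarith [hn K])
  set m := j / ℓ
  set t := n K / (m + 1)
  set Q := L / P
  have hm : 1 ≤ m := (Nat.one_le_div_iff hℓ).mpr hK
  have hmj : m * ℓ ≤ j := Nat.div_mul_le_self j ℓ
  have hjm : j < (m + 1) * ℓ := by rw [add_one_mul]; exact Nat.lt_div_mul_add hℓ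
  have hmn : m + 1 ≤ n K := by
    by_contra h; nlinarith
  have htn : t * (m + 1) ≤ n K := Nat.div_mul_le_self _ _
  have hnt : n K < 2 * (t * (m + 1)) := Nat.lt_two_mul_div_mul (by omega) hmn
  have hQP : Q * P ≤ L := Nat.div_mul_le_self _ _
  have hLQ : L < 2 * (Q * P) := Nat.lt_two_mul_div_mul (period_pos _) hL
  have hdP : t * ((m + 1) * ℓ) ≤ P := by rw [hP, ← mul_assoc]; exact Nat.mul_le_mul_right _ htn
  have hgrid : Q * t ≤ nonoverlap (prefixWord (pInf a n) j) (prefixWord (pInf a n) L) := by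
    refine mul_le_nonoverlap_of_grid (prefixWord_ne_nil _ (hℓ.trans_le hK))
      (by rw [length_prefixWord]; omega) hdP fun q hq r hr => ?_
    have hrP : r * ((m + 1) * ℓ) + (m + 1) * ℓ ≤ P := by
      rw [← add_one_mul]; exact (Nat.mul_le_mul_right _ hr).trans hdP
    refine occursAt_prefixWord ?_ fun i hi => pInf_add_eq (k := K) hn ?_ ?_
    · have : (q + 1) * P ≤ Q * P := Nat.mul_le_mul_right _ hq
      rw [add_one_mul] at this
      omega
    · exact dvd_add (dvd_mul_of_dvd_right (period_dvd hn K.le_succ) _)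
        (dvd_mul_of_dvd_right (dvd_mul_left _ _) _)
    · rw [mul_comm q, Nat.mul_add_mod, Nat.mod_eq_of_lt (by omega)]
      omega
  calc L ≤ 2 * Q * (n K * ℓ) := by rw [← hP]; linarith
    _ ≤ 2 * Q * (2 * (t * (2 * m)) * ℓ) := by
        have : t * (m + 1) ≤ t * (2 * m) := Nat.mul_le_mul_left _ (by omega)
        gcongr; omega
    _ = 8 * (m * ℓ) * (Q * t) := by ring
    _ ≤ 8 * j * nonoverlap (prefixWord (pInf a n) j) (prefixWord (pInf a n) L) := by gcongr

end SimpleToeplitz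

open SimpleToeplitz

theorem simpleToeplitz_PQ_general {A : Type*} (a : ℕ → A) (n : ℕ → ℕ)
    (hn : ∀ k, 2 ≤ n k) (j : ℕ) (hj : 1 ≤ j) :
    (1 : ℝ) / 8 ≤ Filter.liminf (fun L : ℕ =>
      (j : ℝ) / (L : ℝ) *
        (nonoverlap (prefixWord (pInf a n) j) (prefixWord (pInf a n) L) : ℝ))
      Filter.atTop := by
  obtain ⟨K, hK, hK'⟩ := exists_period_le_lt (a := a) hn hj
  apply Filter.le_liminf_of_le
  · refine Filter.isCoboundedUnder_ge_of_le _ (x := (j : ℝ)) fun L => ?_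
    have hN : (nonoverlap (prefixWord (pInf a n) j) (prefixWord (pInf a n) L) : ℝ) ≤ L := by
      exact_mod_cast (nonoverlap_le_length (prefixWord_ne_nil _ hj)).trans_eq
        (length_prefixWord _ _)
    rcases L.eq_zero_or_pos with rfl | hL
    · simp
    · rw [div_mul_eq_mul_div, div_le_iff₀ (by exact_mod_cast hL)]
      gcongr
  · filter_upwards [Filter.eventually_ge_atTop (period a n (K + 1))] with L hL
    have hL0 : (0 : ℝ) < L := by exact_mod_cast (period_pos (a := a) (n := n) _).trans_le hL
    have h8 : (L : ℝ) ≤ 8 * j *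
        (nonoverlap (prefixWord (pInf a n) j) (prefixWord (pInf a n) L) : ℝ) := by
      exact_mod_cast le_eight_mul_nonoverlap hn hK hK' hL
    rw [div_mul_eq_mul_div, le_div_iff₀ hL0]
    linarith

/-- The simple Toeplitz word `p^(∞)` satisfies condition (PQ) with constant `1/8`:
for every `j ≥ 1`, `liminf_{L→∞} (j/L)·#_nonoverlap(p^(∞)[1..j], p^(∞)[1..L]) ≥ 1/8`. -/
theorem simpleToeplitz_PQ {A : Type*} [Fintype A] (a : ℕ → A) (n : ℕ → ℕ)
    (hn : ∀ k, 2 ≤ n k) (j : ℕ) (hj : 1 ≤ j) :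
    (1 : ℝ) / 8 ≤ Filter.liminf (fun L : ℕ =>
      (j : ℝ) / (L : ℝ) *
        (nonoverlap (prefixWord (pInf a n) j) (prefixWord (pInf a n) L) : ℝ))
      Filter.atTop :=
  simpleToeplitz_PQ_general a n hn j hj
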